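/- arXiv:2603.23799 — 3 statements merged into one kernel-verified Lean document; each statement's English description precedes it below -/
import Mathlib

section
/- (Sufficient descent, Lemma 4.2.) Let ε > 0, κ ≥ 0, and let g_data, g_phy be non-zero vectors in a real inner product space. Let λ = (‖g_data‖/(‖g_phy‖ + ε)) · σ(κ · S_cos(g_data, g_phy)) and d = g_data + λ · g_phy. Then ⟨d, g_data⟩ ≥ (1 - M_κ) · ‖g_data‖², where M_κ = sup_{s ∈ [0,1]} s/(1 + exp(κ·s)). -/
open RealInnerProductSpace

/-- The sigmoid function `σ(x) = 1/(1 + e^{-x})`. -/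
noncomputable def sigmoid (x : ℝ) : ℝ := 1 / (1 + Real.exp (-x))

/-- Cosine similarity of two vectors in a real inner product space. -/
noncomputable def scos {E : Type*} [NormedAddCommGroup E] [InnerProductSpace ℝ E]
    (u v : E) : ℝ := ⟪u, v⟫ / (‖u‖ * ‖v‖)

/-- The gate constant `M_κ = sup_{s ∈ [0,1]} s / (1 + e^{κ s})`. -/
noncomputable def gateConstant (κ : ℝ) : ℝ :=
  sSup ((fun s : ℝ => s / (1 + Real.exp (κ * s))) '' Set.Icc (0 : ℝ) 1)

lemma gate_le (κ s : ℝ) (hs : s ∈ Set.Icc (0 : ℝ) 1) :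
    s / (1 + Real.exp (κ * s)) ≤ gateConstant κ := by
  apply le_csSup
  · refine ⟨1, ?_⟩
    rintro y ⟨t, ht, rfl⟩
    have h1 : (1 : ℝ) ≤ 1 + Real.exp (κ * t) := by linarith [Real.exp_pos (κ * t)]
    calc t / (1 + Real.exp (κ * t)) ≤ t := div_le_self ht.1 h1
      _ ≤ 1 := ht.2
  · exact ⟨s, hs, rfl⟩

lemma gate_nonneg (κ : ℝ) : 0 ≤ gateConstant κ := by
  have := gate_le κ 0 (by simp)
  simpa using this

/-- **Sufficient descent (Lemma 4.2).**
With `λ = (‖g_data‖/(‖g_phy‖+ε)) σ(κ S_cos)` and `d = g_data + λ • g_phy`,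
`⟨d, g_data⟩ ≥ (1 - M_κ) ‖g_data‖²`. -/
theorem cggs_sufficient_descent
    {E : Type*} [NormedAddCommGroup E] [InnerProductSpace ℝ E]
    (ε κ : ℝ) (hε : 0 < ε) (hκ : 0 ≤ κ)
    (g_data g_phy : E) (h_data : g_data ≠ 0) (h_phy : g_phy ≠ 0) :
    ⟪g_data + ((‖g_data‖ / (‖g_phy‖ + ε)) * sigmoid (κ * scos g_data g_phy)) • g_phy,
        g_data⟫ ≥ (1 - gateConstant κ) * ‖g_data‖ ^ 2 := by
  have ha : (0:ℝ) < ‖g_data‖ := norm_pos_iff.mpr h_data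
  have hb : (0:ℝ) < ‖g_phy‖ := norm_pos_iff.mpr h_phy
  set c := scos g_data g_phy with hc_def
  have hc1 : |c| ≤ 1 := abs_real_inner_div_norm_mul_norm_le_one g_data g_phy
  have hinner : ⟪g_phy, g_data⟫ = c * (‖g_data‖ * ‖g_phy‖) := by
    rw [real_inner_comm, hc_def, scos]
    field_simp
  have hM0 : 0 ≤ gateConstant κ := gate_nonneg κ
  rw [inner_add_left, real_inner_smul_left, real_inner_self_eq_norm_sq, hinner]
  rcases le_or_gt 0 c with hc | hc
  · have hσ : 0 ≤ sigmoid (κ * c) := by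
      rw [sigmoid]; positivity
    have hlam : 0 ≤ ‖g_data‖ / (‖g_phy‖ + ε) := by positivity
    nlinarith [mul_pos ha hb, sq_nonneg ‖g_data‖,
      mul_nonneg (mul_nonneg hlam hσ) (mul_nonneg hc (le_of_lt (mul_pos ha hb)))]
  · set s := -c with hs_def
    have hs0 : 0 < s := by simp [hs_def]; linarith
    have hs1 : s ≤ 1 := by
      have := abs_le.mp hc1
      simp [hs_def]; linarith [this.1]
    have hE : 0 < Real.exp (κ * s) := Real.exp_pos _
    have hσ : sigmoid (κ * c) = 1 / (1 + Real.exp (κ * s)) := by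
      rw [sigmoid, hs_def]
      ring_nf
    have hM : s / (1 + Real.exp (κ * s)) ≤ gateConstant κ :=
      gate_le κ s ⟨le_of_lt hs0, hs1⟩
    rw [hσ]
    have hkey : (‖g_data‖ / (‖g_phy‖ + ε)) * (1 / (1 + Real.exp (κ * s))) *
        (c * (‖g_data‖ * ‖g_phy‖))
        = -((s / (1 + Real.exp (κ * s))) * (‖g_phy‖ / (‖g_phy‖ + ε)) * ‖g_data‖ ^ 2) := by
      rw [hs_def]; field_simp
    rw [hkey]
    have hr1 : ‖g_phy‖ / (‖g_phy‖ + ε) ≤ 1 := by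
      rw [div_le_one (by linarith)]; linarith
    have hr0 : 0 ≤ ‖g_phy‖ / (‖g_phy‖ + ε) := by positivity
    have hq0 : 0 ≤ s / (1 + Real.exp (κ * s)) := by positivity
    nlinarith [mul_le_mul_of_nonneg_right (mul_le_mul hM hr1 hr0 hM0) (sq_nonneg ‖g_data‖)]
end

section
/- (Convergence of CGGS, Theorem 4.4.) Let f : ℝ^n → ℝ be differentiable with L-Lipschitz gradient and bounded below by f* = inf f > -∞. Let c ∈ (0,1] and η ≤ c/(4L), and let (θ_t)_{t≥0} satisfy θ_{t+1} = θ_t - η·d_t, where each d_t satisfies ⟨∇f(θ_t), d_t⟩ ≥ c·‖∇f(θ_t)‖² and ‖d_t‖² ≤ 4·‖∇f(θ_t)‖². Then for every T ≥ 1, min_{0 ≤ t < T} ‖∇f(θ_t)‖² ≤ 2·(f(θ_0) - f*)/(c·η·T). -/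
open RealInnerProductSpace

variable {E : Type*} [NormedAddCommGroup E] [InnerProductSpace ℝ E] [CompleteSpace E]

lemma line_hasDerivAt (f : E → ℝ) (hdiff : Differentiable ℝ f) (x v : E) (s : ℝ) :
    HasDerivAt (fun s : ℝ => f (x + s • v)) ⟪gradient f (x + s • v), v⟫ s := by
  have h1 : HasDerivAt (fun s : ℝ => x + s • v) v s := by
    simpa using ((hasDerivAt_id s).smul_const v).const_add x
  have h2 := ((hdiff (x + s • v)).hasGradientAt.hasFDerivAt).comp_hasDerivAt s h1
  exact h2

lemma descent_lemma (f : E → ℝ) (L : ℝ) (hL : 0 < L)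
    (hdiff : Differentiable ℝ f)
    (hlip : ∀ x y, ‖gradient f x - gradient f y‖ ≤ L * ‖x - y‖)
    (x v : E) :
    f (x + v) ≤ f x + ⟪gradient f x, v⟫ + L / 2 * ‖v‖ ^ 2 := by
  set g : ℝ → ℝ := fun s => f (x + s • v) - s * ⟪gradient f x, v⟫ - L * s ^ 2 / 2 * ‖v‖ ^ 2 with hg
  have hderiv : ∀ s : ℝ, HasDerivAt g
      (⟪gradient f (x + s • v), v⟫ - ⟪gradient f x, v⟫ - L * s * ‖v‖ ^ 2) s := by
    intro s
    have := ((line_hasDerivAt f hdiff x v s).sub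
      ((hasDerivAt_id s).mul_const ⟪gradient f x, v⟫)).sub
      (((((hasDerivAt_pow 2 s).const_mul L).div_const 2).mul_const (‖v‖ ^ 2)))
    convert this using 1
    · rfl
    · rfl
    · rfl
    · rw [show (2:ℕ) - 1 = 1 from rfl]; push_cast; ring
  have hanti : AntitoneOn g (Set.Icc (0:ℝ) 1) := by
    apply antitoneOn_of_deriv_nonpos (convex_Icc 0 1)
    · exact Continuous.continuousOn (by
        have : Continuous g := by
          apply Continuous.sub
          apply Continuous.sub
          · exact hdiff.continuous.comp (by continuity)
          · continuity
          · continuity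
        exact this)
    · intro s hs
      exact (hderiv s).differentiableAt.differentiableWithinAt
    · intro s hs
      rw [(hderiv s).deriv]
      simp only [interior_Icc, Set.mem_Ioo] at hs
      have h1 : ⟪gradient f (x + s • v), v⟫ - ⟪gradient f x, v⟫
          = ⟪gradient f (x + s • v) - gradient f x, v⟫ := by
        rw [inner_sub_left]
      rw [h1]
      have h2 : ⟪gradient f (x + s • v) - gradient f x, v⟫ ≤
          ‖gradient f (x + s • v) - gradient f x‖ * ‖v‖ :=
        real_inner_le_norm _ _
      have h3 : ‖gradient f (x + s • v) - gradient f x‖ ≤ L * (s * ‖v‖) := by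
        have := hlip (x + s • v) x
        simpa [norm_smul, abs_of_nonneg hs.1.le] using this
      nlinarith [norm_nonneg v, norm_nonneg (gradient f (x + s • v) - gradient f x)]
  have := hanti (Set.mem_Icc.mpr ⟨le_refl 0, zero_le_one⟩)
    (Set.mem_Icc.mpr ⟨zero_le_one, le_refl 1⟩) zero_le_one
  simp only [hg, one_smul, zero_smul, add_zero, one_mul, one_pow, zero_mul, zero_pow,
    mul_zero, sub_zero, zero_div] at this
  linarith


/-- **Convergence of CGGS (Theorem 4.4).**
If `f` has `L`-Lipschitz gradient and is bounded below with infimum `f*`, and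
the iterates `θ_{t+1} = θ_t - η d_t` satisfy the sufficient-descent and norm
conditions with `c ∈ (0,1]` and `0 < η ≤ c/(4L)`, then for every `T ≥ 1`,
`min_{0 ≤ t < T} ‖∇f(θ_t)‖² ≤ 2 (f(θ_0) - f*) / (c η T)`. -/
theorem cggs_convergence {n : ℕ}
    (f : EuclideanSpace ℝ (Fin n) → ℝ) (L : ℝ) (hL : 0 < L)
    (hdiff : Differentiable ℝ f)
    (hlip : ∀ x y, ‖gradient f x - gradient f y‖ ≤ L * ‖x - y‖)
    (hbdd : BddBelow (Set.range f))
    (c η : ℝ) (hc0 : 0 < c) (hc1 : c ≤ 1) (hη0 : 0 < η) (hη : η ≤ c / (4 * L))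
    (θ d : ℕ → EuclideanSpace ℝ (Fin n))
    (hstep : ∀ t, θ (t + 1) = θ t - η • d t)
    (hd1 : ∀ t, ⟪gradient f (θ t), d t⟫ ≥ c * ‖gradient f (θ t)‖ ^ 2)
    (hd2 : ∀ t, ‖d t‖ ^ 2 ≤ 4 * ‖gradient f (θ t)‖ ^ 2)
    (T : ℕ) (hT : 1 ≤ T) :
    (Finset.range T).inf' (Finset.nonempty_range_iff.mpr (by omega))
        (fun t => ‖gradient f (θ t)‖ ^ 2) ≤
      2 * (f (θ 0) - ⨅ x, f x) / (c * η * T) := by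
  set g : ℕ → ℝ := fun t => ‖gradient f (θ t)‖ ^ 2 with hg
  have hgnn : ∀ t, 0 ≤ g t := fun t => sq_nonneg _
  -- per-step descent
  have hstep' : ∀ t, f (θ (t + 1)) ≤ f (θ t) - c * η / 2 * g t := by
    intro t
    have h0 : θ (t + 1) = θ t + (-η) • d t := by
      rw [hstep t]; module
    have h1 := descent_lemma f L hL hdiff hlip (θ t) ((-η) • d t)
    rw [← h0] at h1
    have h2 : ⟪gradient f (θ t), (-η) • d t⟫ = -η * ⟪gradient f (θ t), d t⟫ :=
      real_inner_smul_right _ _ _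
    have h3 : ‖(-η) • d t‖ ^ 2 = η ^ 2 * ‖d t‖ ^ 2 := by
      rw [norm_smul]; simp [abs_of_pos hη0]; ring
    have h4 := hd1 t
    have h5 := hd2 t
    have hηL : 4 * L * η ≤ c := by
      rw [div_eq_mul_inv] at hη
      calc 4 * L * η ≤ 4 * L * (c * (4 * L)⁻¹) := by
            apply mul_le_mul_of_nonneg_left hη (by positivity)
        _ = c := by field_simp
    rw [h2, h3] at h1
    have hLd : L / 2 * (η ^ 2 * ‖d t‖ ^ 2) ≤ 2 * L * η ^ 2 * g t := by
      have := hd2 t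
      have h5' : ‖d t‖ ^ 2 ≤ 4 * g t := h5
      nlinarith [mul_le_mul_of_nonneg_left h5' (show (0:ℝ) ≤ L/2*η^2 by positivity)]
    have h6 : 2 * L * η ^ 2 ≤ c * η / 2 := by nlinarith
    have h7 : 2 * L * η ^ 2 * g t ≤ c * η / 2 * g t :=
      mul_le_mul_of_nonneg_right h6 (hgnn t)
    have h8 : η * (c * g t) ≤ η * ⟪gradient f (θ t), d t⟫ :=
      mul_le_mul_of_nonneg_left h4 hη0.le
    simp only [hg] at *
    linarith
  -- telescoping sum
  have hsum : ∀ N : ℕ, c * η / 2 * ∑ t ∈ Finset.range N, g t ≤ f (θ 0) - f (θ N) := by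
    intro N
    induction N with
    | zero => simp
    | succ N ih =>
      rw [Finset.sum_range_succ]
      have := hstep' N
      nlinarith
  have hinf : (⨅ x, f x) ≤ f (θ T) := ciInf_le hbdd (θ T)
  set m := (Finset.range T).inf' (Finset.nonempty_range_iff.mpr (by omega)) g with hm
  have hmsum : (T : ℝ) * m ≤ ∑ t ∈ Finset.range T, g t := by
    have := Finset.card_nsmul_le_sum (Finset.range T) g m
      (fun t ht => Finset.inf'_le g ht)
    simpa [nsmul_eq_mul] using this
  have hTpos : (0:ℝ) < T := by exact_mod_cast hT
  rw [le_div_iff₀ (show (0:ℝ) < c * η * T by positivity)]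
  have h1 := hsum T
  have hcη : 0 < c * η / 2 := by positivity
  nlinarith [mul_le_mul_of_nonneg_left hmsum hcη.le]
end

section
/- (ε-stationarity in O(1/ε) steps.) Under the hypotheses of the CGGS convergence theorem (f differentiable with L-Lipschitz gradient, bounded below by f*, c ∈ (0,1], η ≤ c/(4L), updates θ_{t+1} = θ_t - η·d_t with ⟨∇f(θ_t), d_t⟩ ≥ c·‖∇f(θ_t)‖² and ‖d_t‖² ≤ 4·‖∇f(θ_t)‖²), for every ε > 0 and every integer T ≥ 2·(f(θ_0) - f*)/(c·η·ε), there exists t < T with ‖∇f(θ_t)‖² ≤ ε. -/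
open RealInnerProductSpace

/-- Descent lemma: quadratic upper bound for an `L`-smooth function. -/
lemma cggs_descent {n : ℕ}
    (f : EuclideanSpace ℝ (Fin n) → ℝ) (L : ℝ) (hL : 0 < L)
    (hdiff : Differentiable ℝ f)
    (hlip : ∀ x y, ‖gradient f x - gradient f y‖ ≤ L * ‖x - y‖)
    (x v : EuclideanSpace ℝ (Fin n)) :
    f (x + v) ≤ f x + ⟪gradient f x, v⟫ + L / 2 * ‖v‖ ^ 2 := by
  have hgc : Continuous fun y => gradient f y := by
    have : LipschitzWith (Real.toNNReal L) (gradient f) := by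
      apply LipschitzWith.of_dist_le_mul
      intro a b
      rw [dist_eq_norm, dist_eq_norm]
      calc ‖gradient f a - gradient f b‖ ≤ L * ‖a - b‖ := hlip a b
        _ = (Real.toNNReal L : ℝ) * ‖a - b‖ := by rw [Real.coe_toNNReal L hL.le]
    exact this.continuous
  have key : ∀ t : ℝ, HasDerivAt (fun s : ℝ => f (x + s • v))
      ⟪gradient f (x + t • v), v⟫ t := by
    intro t
    have h1 : HasDerivAt (fun s : ℝ => x + s • v) v t := by
      simpa using ((hasDerivAt_id t).smul_const v).const_add x
    have h2 := ((hdiff (x + t • v)).hasGradientAt.hasFDerivAt).comp_hasDerivAt t h1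
    simpa [InnerProductSpace.toDual_apply_apply, Function.comp_def] using h2
  have hcont : Continuous fun t : ℝ => ⟪gradient f (x + t • v), v⟫ := by
    apply Continuous.inner
    · exact hgc.comp (by continuity)
    · exact continuous_const
  have hint : f (x + v) - f x = ∫ t in (0:ℝ)..1, ⟪gradient f (x + t • v), v⟫ := by
    have := intervalIntegral.integral_eq_sub_of_hasDerivAt
      (fun t _ => key t) (hcont.intervalIntegrable 0 1)
    simpa using this.symm
  have hbound : ∀ t ∈ Set.Icc (0:ℝ) 1,
      ⟪gradient f (x + t • v), v⟫ ≤ ⟪gradient f x, v⟫ + L * ‖v‖ ^ 2 * t := by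
    intro t ht
    have h1 : ⟪gradient f (x + t • v), v⟫ - ⟪gradient f x, v⟫
        = ⟪gradient f (x + t • v) - gradient f x, v⟫ := (inner_sub_left _ _ _).symm
    have h2 : ⟪gradient f (x + t • v) - gradient f x, v⟫
        ≤ ‖gradient f (x + t • v) - gradient f x‖ * ‖v‖ := real_inner_le_norm _ _
    have h3 : ‖gradient f (x + t • v) - gradient f x‖ ≤ L * (t * ‖v‖) := by
      have := hlip (x + t • v) x
      simpa [norm_smul, abs_of_nonneg ht.1] using this
    nlinarith [norm_nonneg v, norm_nonneg (gradient f (x + t • v) - gradient f x), ht.1]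
  have hmono : (∫ t in (0:ℝ)..1, ⟪gradient f (x + t • v), v⟫)
      ≤ ∫ t in (0:ℝ)..1, (⟪gradient f x, v⟫ + L * ‖v‖ ^ 2 * t) := by
    apply intervalIntegral.integral_mono_on (by norm_num)
      (hcont.intervalIntegrable 0 1)
      ((by continuity : Continuous fun t : ℝ =>
        ⟪gradient f x, v⟫ + L * ‖v‖ ^ 2 * t).intervalIntegrable 0 1)
    exact hbound
  have hval : (∫ t in (0:ℝ)..1, (⟪gradient f x, v⟫ + L * ‖v‖ ^ 2 * t))
      = ⟪gradient f x, v⟫ + L / 2 * ‖v‖ ^ 2 := by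
    have hII : IntervalIntegrable (fun t : ℝ => L * ‖v‖ ^ 2 * t)
        MeasureTheory.volume 0 1 :=
      (continuous_const.mul continuous_id').intervalIntegrable 0 1
    rw [intervalIntegral.integral_add intervalIntegrable_const hII,
      intervalIntegral.integral_const, intervalIntegral.integral_const_mul,
      integral_id]
    norm_num
    ring
  linarith [hint, hmono.trans_eq hval]

/-- **`ε`-stationarity in `O(1/ε)` steps (corollary of Theorem 4.4).**
Under the hypotheses of the CGGS convergence theorem, for every `ε > 0` and
every integer `T ≥ 2 (f(θ_0) - f*) / (c η ε)`, there exists `t < T` with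
`‖∇f(θ_t)‖² ≤ ε`. -/
theorem cggs_eps_stationary {n : ℕ}
    (f : EuclideanSpace ℝ (Fin n) → ℝ) (L : ℝ) (hL : 0 < L)
    (hdiff : Differentiable ℝ f)
    (hlip : ∀ x y, ‖gradient f x - gradient f y‖ ≤ L * ‖x - y‖)
    (hbdd : BddBelow (Set.range f))
    (c η : ℝ) (hc0 : 0 < c) (hc1 : c ≤ 1) (hη0 : 0 < η) (hη : η ≤ c / (4 * L))
    (θ d : ℕ → EuclideanSpace ℝ (Fin n))
    (hstep : ∀ t, θ (t + 1) = θ t - η • d t)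
    (hd1 : ∀ t, ⟪gradient f (θ t), d t⟫ ≥ c * ‖gradient f (θ t)‖ ^ 2)
    (hd2 : ∀ t, ‖d t‖ ^ 2 ≤ 4 * ‖gradient f (θ t)‖ ^ 2)
    (ε : ℝ) (hε : 0 < ε)
    (T : ℕ) (hT : 1 ≤ T)
    (hTbig : 2 * (f (θ 0) - ⨅ x, f x) / (c * η * ε) ≤ (T : ℝ)) :
    ∃ t < T, ‖gradient f (θ t)‖ ^ 2 ≤ ε := by
  by_contra h
  push_neg at h
  -- per-step decrease
  have hdec : ∀ t, f (θ (t + 1)) ≤ f (θ t) - c * η / 2 * ‖gradient f (θ t)‖ ^ 2 := by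
    intro t
    have hstep' : θ (t + 1) = θ t + (-η) • d t := by
      rw [hstep t, sub_eq_add_neg, neg_smul]
    have hdes := cggs_descent f L hL hdiff hlip (θ t) ((-η) • d t)
    rw [← hstep'] at hdes
    have hin : ⟪gradient f (θ t), (-η) • d t⟫ = -η * ⟪gradient f (θ t), d t⟫ := by
      rw [real_inner_smul_right]
    have hns : ‖(-η) • d t‖ ^ 2 = η ^ 2 * ‖d t‖ ^ 2 := by
      rw [norm_smul]
      simp [abs_of_pos hη0]
      ring
    have h1 := hd1 t
    have h2 := hd2 t
    have hηL : 4 * L * η ≤ c := by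
      rw [le_div_iff₀ (by positivity)] at hη
      linarith [hη]
    have hg2 : (0:ℝ) ≤ ‖gradient f (θ t)‖ ^ 2 := by positivity
    rw [hin, hns] at hdes
    have e1 : η * (c * ‖gradient f (θ t)‖ ^ 2) ≤ η * ⟪gradient f (θ t), d t⟫ :=
      mul_le_mul_of_nonneg_left h1 hη0.le
    have e2 : L / 2 * (η ^ 2 * ‖d t‖ ^ 2)
        ≤ L / 2 * (η ^ 2 * (4 * ‖gradient f (θ t)‖ ^ 2)) := by
      apply mul_le_mul_of_nonneg_left _ (by positivity)
      exact mul_le_mul_of_nonneg_left h2 (by positivity)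
    have e3 : 4 * L * η * (η * ‖gradient f (θ t)‖ ^ 2)
        ≤ c * (η * ‖gradient f (θ t)‖ ^ 2) :=
      mul_le_mul_of_nonneg_right hηL (by positivity)
    nlinarith [hdes, e1, e2, e3]
  -- telescoping
  have htel : f (θ 0) - f (θ T) = ∑ t ∈ Finset.range T, (f (θ t) - f (θ (t + 1))) :=
    (Finset.sum_range_sub' (fun t => f (θ t)) T).symm
  have hsumlt : (T : ℝ) * (c * η / 2 * ε) < f (θ 0) - f (θ T) := by
    rw [htel]
    have : ∑ t ∈ Finset.range T, (c * η / 2 * ε)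
        < ∑ t ∈ Finset.range T, (f (θ t) - f (θ (t + 1))) := by
      apply Finset.sum_lt_sum_of_nonempty
      · exact Finset.nonempty_range_iff.mpr (by omega)
      · intro t ht
        have := hdec t
        have hgt := h t (Finset.mem_range.mp ht)
        have : c * η / 2 * ε < c * η / 2 * ‖gradient f (θ t)‖ ^ 2 := by
          apply mul_lt_mul_of_pos_left hgt (by positivity)
        linarith [hdec t]
    simpa using this
  have hinf : (⨅ x, f x) ≤ f (θ T) := ciInf_le hbdd (θ T)
  have hpos : 0 < c * η * ε := by positivity
  rw [div_le_iff₀ hpos] at hTbig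
  nlinarith [hsumlt, hinf, hTbig]
end
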